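/- Let A_1, …, A_k be pairwise commuting N×N matrices with nonnegative integer entries and no zero rows forming an irreducible family, let ρ_i be the spectral radius of A_i, suppose ρ_i > 1 for all i, let x be the unimodular Perron–Frobenius eigenvector, and fix δ ∈ (0,1). Then the following are equivalent: (i) for every finite path λ ∈ FB, w_δ(λ) equals the d_δ-diameter of the cylinder set [λ], i.e., w_δ(λ) = sup{d_δ(x,y) : x, y ∈ [λ]}; (ii) every row sum of every A_i is at least 2, i.e., Σ_b A_i(a,b) ≥ 2 for all a ∈ {1,…,N} and all 1 ≤ i ≤ k. -/

import Mathlib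

open scoped Classical ENNReal Topology
open TopologicalSpace MeasureTheory Filter Set
open Fin.NatCast

namespace KBratteli

variable (k N : ℕ) [NeZero k] (A : Fin k → Matrix (Fin N) (Fin N) ℕ)

/-- An edge at level `n` of the stationary `k`-Bratteli diagram of the matrices
`A 0, …, A (k-1)`: an element of `Edge k N A n` is an edge whose source lies in the
level-`(n+1)` vertex set and whose range lies in the level-`n` vertex set (both copies of
`Fin N`); there are exactly `A (n % k) p q` edges with range `p` and source `q`. -/
structure Edge (n : ℕ) : Type where
  rg : Fin N
  src : Fin N
  idx : Fin (A (n : Fin k) rg src)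

/-- The infinite path space `X_B` of the stationary `k`-Bratteli diagram of `A`. -/
def PathSpace : Type :=
  { x : (n : ℕ) → Edge k N A n // ∀ n, (x n).src = (x (n + 1)).rg }

/-- A finite path of length `ℓ` beginning at level `0`: a composable string of edges,
together with the vertices it visits.  Length-`0` paths are vertices of `V₀`. -/
structure FinPath (ℓ : ℕ) : Type where
  vtx : Fin (ℓ + 1) → Fin N
  edge : (i : Fin ℓ) → Edge k N A i
  rg_eq : ∀ i : Fin ℓ, (edge i).rg = vtx i.castSucc
  src_eq : ∀ i : Fin ℓ, (edge i).src = vtx i.succ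

/-- `FB`: the set of all finite paths (of all lengths) beginning at level `0`. -/
abbrev FB : Type := Σ ℓ : ℕ, FinPath k N A ℓ

variable {k N A}

/-- The source (final) vertex of a finite path. -/
def FinPath.src {ℓ : ℕ} (lam : FinPath k N A ℓ) : Fin N := lam.vtx (Fin.last ℓ)

/-- The range (initial, level-0) vertex of a finite path. -/
def FinPath.rg {ℓ : ℕ} (lam : FinPath k N A ℓ) : Fin N := lam.vtx 0

/-- The length-0 finite path at the level-0 vertex `v`. -/
def vertexPath (v : Fin N) : FinPath k N A 0 where
  vtx := fun _ => v
  edge := fun i => i.elim0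
  rg_eq := fun i => i.elim0
  src_eq := fun i => i.elim0

/-- The cylinder set `[λ]` of a finite path `λ`: all infinite paths with initial
segment `λ`. -/
def Cyl {ℓ : ℕ} (lam : FinPath k N A ℓ) : Set (PathSpace k N A) :=
  { x | (x.1 0).rg = lam.rg ∧ ∀ i : Fin ℓ, x.1 i = lam.edge i }

variable (k N A) in
/-- The collection of all cylinder sets. -/
def cylinderSets : Set (Set (PathSpace k N A)) :=
  { S | ∃ (ℓ : ℕ) (lam : FinPath k N A ℓ), S = Cyl lam }

/-- The cylinder-set topology on the infinite path space. -/
instance : TopologicalSpace (PathSpace k N A) :=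
  generateFrom (cylinderSets k N A)

/-- The Borel σ-algebra of the cylinder-set topology. -/
instance : MeasurableSpace (PathSpace k N A) := borel _

instance : BorelSpace (PathSpace k N A) := ⟨rfl⟩

lemma isOpen_cyl {ℓ : ℕ} (lam : FinPath k N A ℓ) : IsOpen (Cyl lam) :=
  isOpen_generateFrom_of_mem ⟨ℓ, lam, rfl⟩

lemma measurableSet_cyl {ℓ : ℕ} (lam : FinPath k N A ℓ) : MeasurableSet (Cyl lam) :=
  (isOpen_cyl lam).measurableSet

/-- Edges form a finite type. -/
def edgeEquiv (n : ℕ) : Edge k N A n ≃ Σ p : Fin N, Σ q : Fin N, Fin (A (n : Fin k) p q) where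
  toFun e := ⟨e.rg, e.src, e.idx⟩
  invFun t := ⟨t.1, t.2.1, t.2.2⟩
  left_inv e := rfl
  right_inv t := rfl

instance (n : ℕ) : Finite (Edge k N A n) := by
  have : ∀ p, Finite (Σ q : Fin N, Fin (A (n : Fin k) p q)) := fun p => Finite.instSigma
  have : Finite (Σ p : Fin N, Σ q : Fin N, Fin (A (n : Fin k) p q)) := Finite.instSigma
  exact Finite.of_equiv _ (edgeEquiv n).symm

instance (ℓ : ℕ) : Finite (FinPath k N A ℓ) := by
  have hinj : Function.Injective
      (fun lam : FinPath k N A ℓ => (lam.vtx, lam.edge)) := by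
    rintro ⟨v, e, h1, h2⟩ ⟨v', e', h1', h2'⟩ h
    simp only [Prod.mk.injEq] at h
    obtain ⟨hv, he⟩ := h
    subst hv; subst he; rfl
  exact Finite.of_injective _ hinj

instance : Countable (FB k N A) := by infer_instance

/-- The initial segment of length `m` of an infinite path. -/
def prefixPath (x : PathSpace k N A) (m : ℕ) : FinPath k N A m where
  vtx := fun i => (x.1 i).rg
  edge := fun i => x.1 i
  rg_eq := fun _ => rfl
  src_eq := fun i => x.2 i

lemma mem_cyl_prefixPath (x : PathSpace k N A) (m : ℕ) : x ∈ Cyl (prefixPath x m) :=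
  ⟨rfl, fun _ => rfl⟩

lemma measurableSet_coord (j : ℕ) (P : Edge k N A j → Prop) :
    MeasurableSet { x : PathSpace k N A | P (x.1 j) } := by
  have h : { x : PathSpace k N A | P (x.1 j) }
      = ⋃ (lam : FinPath k N A (j + 1)) (_ : P (lam.edge (Fin.last j))), Cyl lam := by
    ext x
    simp only [Set.mem_setOf_eq, Set.mem_iUnion]
    constructor
    · intro hx
      exact ⟨prefixPath x (j + 1), hx, mem_cyl_prefixPath x (j + 1)⟩
    · rintro ⟨lam, hP, -, hedge⟩
      have hx : x.1 j = lam.edge (Fin.last j) := hedge (Fin.last j)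
      rw [hx]; exact hP
  rw [h]
  exact MeasurableSet.iUnion fun lam => MeasurableSet.iUnion fun _ => measurableSet_cyl lam

/-- The first level at which two infinite paths differ. -/
noncomputable def firstDiff (x y : PathSpace k N A) : ℕ := sInf { n | x.1 n ≠ y.1 n }

/-- The function `d_w` associated to a weight-type function `w` on finite paths:
`d_w(x,x) = 0`; `d_w(x,y) = 1` if `x` and `y` have no common initial sub-path (i.e. they
do not even start at the same level-0 vertex); and otherwise `d_w(x,y) = w(x ∧ y)`, the
value of `w` on the longest common initial sub-path of `x` and `y`. -/
noncomputable def distW (w : FB k N A → ℝ) (x y : PathSpace k N A) : ℝ :=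
  if x = y then 0
  else if (x.1 0).rg = (y.1 0).rg then w ⟨firstDiff x y, prefixPath x (firstDiff x y)⟩
  else 1

/-- `η` is an (initial) sub-path of `λ`. -/
def IsSubPath {m ℓ : ℕ} (η : FinPath k N A m) (lam : FinPath k N A ℓ) : Prop :=
  ∃ h : m ≤ ℓ, η.rg = lam.rg ∧ ∀ i : Fin m, η.edge i = lam.edge (Fin.castLE h i)

/-- `lam ∈ F_γ B` : the finite path `lam` extends `γ`. -/
def Extends {m : ℕ} (γ : FinPath k N A m) (lam : FB k N A) : Prop :=
  IsSubPath γ lam.2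

/-- The spectral radius of a matrix of nonnegative integers, as a real number. -/
noncomputable def specRad {N : ℕ} (M : Matrix (Fin N) (Fin N) ℕ) : ℝ :=
  (spectralRadius ℂ (M.map (Nat.cast : ℕ → ℂ))).toReal

/-- The weight `w_δ` on the stationary `k`-Bratteli diagram of `A`, relative to data
`ρ : Fin k → ℝ` (the spectral radii) and `xv : Fin N → ℝ` (the Perron–Frobenius
eigenvector): on a path `η` of length `q·k + t` (`0 ≤ t ≤ k-1`) it is
`(ρ₁^{q+1} ⋯ ρ_t^{q+1} · ρ_{t+1}^q ⋯ ρ_k^q)^{-1/δ} · xv (s η)`. -/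
noncomputable def wt (δ : ℝ) (ρ : Fin k → ℝ) (xv : Fin N → ℝ) (lam : FB k N A) : ℝ :=
  (∏ i : Fin k, ρ i ^ (if (i : ℕ) < lam.1 % k then lam.1 / k + 1 else lam.1 / k))
      ^ (-(1 / δ)) * xv lam.2.src

/-- The value `M([λ]) = (ρ₁⋯ρ_t)^{-(q+1)} (ρ_{t+1}⋯ρ_k)^{-q} · x_{s(λ)}` of the
measure `M` on the cylinder set of a path of length `q·k + t`. -/
noncomputable def Mval (ρ : Fin k → ℝ) (xv : Fin N → ℝ) (lam : FB k N A) : ℝ :=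
  (∏ i : Fin k, ρ i ^ (if (i : ℕ) < lam.1 % k then lam.1 / k + 1 else lam.1 / k))⁻¹
    * xv lam.2.src

/-- A family of matrices is irreducible if for every pair of indices some finite product
of matrices from the family has positive corresponding entry. -/
def IrreducibleFamily {k N : ℕ} (A : Fin k → Matrix (Fin N) (Fin N) ℕ) : Prop :=
  ∀ a b : Fin N, ∃ l : List (Fin k), 0 < (l.map A).prod a b

/-- A single square matrix with nonnegative integer entries is irreducible if for every
pair of indices some positive power has positive corresponding entry. -/
def MatIrreducible {N : ℕ} (B : Matrix (Fin N) (Fin N) ℕ) : Prop :=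
  ∀ a b : Fin N, ∃ m : ℕ, 0 < m ∧ 0 < (B ^ m) a b

/-- The diameter (in `ℝ≥0∞`) of a set of infinite paths relative to `d_w`. -/
noncomputable def diamW (w : FB k N A → ℝ) (U : Set (PathSpace k N A)) : ℝ≥0∞ :=
  ⨆ (x) (_ : x ∈ U) (y) (_ : y ∈ U), ENNReal.ofReal (distW w x y)

/-- The `t`-dimensional Hausdorff (outer) measure of a set `Z` relative to the metric
`d_w`: `H^t(Z) = lim_{ε → 0} inf { Σᵢ (diam Uᵢ)^t : Z ⊆ ⋃ᵢ Uᵢ, diam Uᵢ < ε }`. -/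
noncomputable def hausW (w : FB k N A → ℝ) (t : ℝ) (Z : Set (PathSpace k N A)) : ℝ≥0∞ :=
  ⨆ (ε : ℝ≥0∞) (_ : 0 < ε),
    ⨅ (U : ℕ → Set (PathSpace k N A)) (_ : Z ⊆ ⋃ n, U n)
      (_ : ∀ n, diamW w (U n) < ε), ∑' n, diamW w (U n) ^ t

lemma natCast_mul_add (n i : ℕ) : ((n * k + i : ℕ) : Fin k) = (i : Fin k) := by
  push_cast
  simp [Fin.natCast_self]

/-- Transport of edges between levels governed by the same matrix (the diagram is
stationary with period `k`). -/
def Edge.cast {i j : ℕ} (h : (i : Fin k) = (j : Fin k)) (e : Edge k N A i) :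
    Edge k N A j where
  rg := e.rg
  src := e.src
  idx := Fin.cast (by rw [h]) e.idx

/-- The cylinder set `[γ e]` of a finite path `γ` (of length `m`) extended by one
further edge `e` at level `m`. -/
def cylExt {m : ℕ} (γ : FinPath k N A m) (e : Edge k N A m) : Set (PathSpace k N A) :=
  Cyl γ ∩ { x | x.1 m = e }

lemma measurableSet_cylExt {m : ℕ} (γ : FinPath k N A m) (e : Edge k N A m) :
    MeasurableSet (cylExt γ e) :=
  (measurableSet_cyl γ).inter (measurableSet_coord m fun f => f = e)

/-- The cylinder set `[λ μ]` of the concatenation of `λ ∈ F^{nk}B` with `μ ∈ F^{k}B`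
(the diagram being stationary of period `k`, `μ` concatenates onto `λ`). -/
def cylCat {n : ℕ} (lam : FinPath k N A (n * k)) (η : FinPath k N A k) :
    Set (PathSpace k N A) :=
  Cyl lam ∩ { x | (x.1 (n * k)).rg = η.rg } ∩
    ⋂ i : Fin k,
      { x | x.1 (n * k + (i : ℕ)) = Edge.cast (natCast_mul_add n (i : ℕ)).symm (η.edge i) }

lemma measurableSet_cylCat {n : ℕ} (lam : FinPath k N A (n * k)) (η : FinPath k N A k) :
    MeasurableSet (cylCat lam η) :=
  ((measurableSet_cyl lam).inter
      (measurableSet_coord (n * k) (fun e => e.rg = η.rg))).inter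
    (MeasurableSet.iInter fun i => measurableSet_coord (n * k + (i : ℕ))
      (fun e => e = Edge.cast (natCast_mul_add n (i : ℕ)).symm (η.edge i)))



end KBratteli

namespace KBratteli

/-!
Along an infinite path the weights of the prefixes decrease: crossing an edge `a → b` at a
level governed by `A i` multiplies the weight by `ρ_i^{-1/δ} x_b / x_a ≤ ρ_i^{1-1/δ} < 1`, because
`x_b ≤ (A_i x)_a = ρ_i x_a`. So the diameter of `[λ]` is at most `w_δ(λ)`, and it is attained when
two distinct edges leave `s(λ)`: infinite paths through them first differ right after `λ`.
If instead some row `a` of `A_i` has sum `1`, then, since commutativity and irreducibility rule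
out zero columns, some path `λ` of length `i` ends at `a`; all paths in `[λ]` share the unique
next edge, so the diameter of `[λ]` is at most `ρ_i^{1-1/δ} w_δ(λ) < w_δ(λ)`.
-/

section Matrices

variable {ι n : Type*} [Fintype n]

theorem list_prod_map_apply_eq_zero [DecidableEq n] (A : ι → Matrix n n ℕ) (Z : Set n)
    (hZ : ∀ m, ∀ d ∈ Z, ∀ b ∉ Z, A m b d = 0) (l : List ι) :
    ∀ d ∈ Z, ∀ b ∉ Z, (l.map A).prod b d = 0 := by
  induction l with
  | nil =>
    intro d hd b hb
    exact Matrix.one_apply_ne fun h => hb (h ▸ hd)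
  | cons m l ih =>
    intro d hd b hb
    rw [List.map_cons, List.prod_cons, Matrix.mul_apply]
    refine Finset.sum_eq_zero fun y _ => ?_
    by_cases hy : y ∈ Z
    · rw [hZ m y hy b hb, zero_mul]
    · rw [ih d hd y hy, mul_zero]

theorem le_mul_of_mulVec_eq_smul {M : Matrix n n ℕ} {x : n → ℝ} {r : ℝ} (hx : 0 ≤ x)
    (hM : (M.map (Nat.cast : ℕ → ℝ)).mulVec x = r • x) {a b : n} (hab : 0 < M a b) :
    x b ≤ r * x a := by
  have hrow : ∑ c, (M a c : ℝ) * x c = r * x a := by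
    simpa [Matrix.mulVec, dotProduct] using congrFun hM a
  calc x b ≤ (M a b : ℝ) * x b :=
        le_mul_of_one_le_left (hx b) (by exact_mod_cast hab)
    _ ≤ ∑ c, (M a c : ℝ) * x c :=
        Finset.single_le_sum (fun c _ => mul_nonneg (Nat.cast_nonneg _) (hx c))
          (Finset.mem_univ b)
    _ = r * x a := hrow

end Matrices

theorem exists_pos_apply_col {k N : ℕ} {A : Fin k → Matrix (Fin N) (Fin N) ℕ}
    (hcomm : ∀ i j, A i * A j = A j * A i) (hrow : ∀ i a, ∃ b, 0 < A i a b)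
    (hirr : IrreducibleFamily A) (j : Fin k) (c : Fin N) : ∃ b, 0 < A j b c := by
  by_contra! hc
  set Z : Set (Fin N) := {d | ∀ b, A j b d = 0}
  have hcZ : c ∈ Z := fun b => Nat.le_zero.mp (hc b)
  -- `A m * A j` vanishes on the columns in `Z`, hence so does `A j * A m`.
  have hZ : ∀ m, ∀ d ∈ Z, ∀ b ∉ Z, A m b d = 0 := by
    intro m d hd b hb
    obtain ⟨r, hr⟩ : ∃ r, A j r b ≠ 0 := by simpa [Z] using hb
    have hzero : (A j * A m) r d = 0 := by
      rw [hcomm j m, Matrix.mul_apply]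
      exact Finset.sum_eq_zero fun y _ => by rw [hd y, mul_zero]
    rw [Matrix.mul_apply, Finset.sum_eq_zero_iff] at hzero
    exact (Nat.mul_eq_zero.mp (hzero b (Finset.mem_univ b))).resolve_left hr
  obtain ⟨b, hb⟩ := hrow j c
  obtain ⟨l, hl⟩ := hirr b c
  have hbZ : b ∉ Z := fun h => (h c).not_gt hb
  exact hl.ne' (list_prod_map_apply_eq_zero A Z hZ l c hcZ b hbZ)

-- The exponent of `ρ i` in `w_δ` at level `n` counts the levels `m < n` with `m ≡ i [MOD k]`.
theorem ite_lt_mod_succ {k : ℕ} [NeZero k] (i : Fin k) (n : ℕ) :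
    (if (i : ℕ) < (n + 1) % k then (n + 1) / k + 1 else (n + 1) / k)
      = (if (i : ℕ) < n % k then n / k + 1 else n / k) + if (n : Fin k) = i then 1 else 0 := by
  have hk : 0 < k := NeZero.pos k
  have hn := Nat.mod_add_div n k
  have hr := Nat.mod_lt n hk
  have hi := i.isLt
  simp only [Fin.ext_iff, Fin.val_natCast]
  obtain h | h := (Nat.succ_le_of_lt hr).lt_or_eq
  · obtain ⟨hd, hm⟩ := (Nat.div_mod_unique hk).mpr (⟨by omega, h⟩ :
      n % k + 1 + k * (n / k) = n + 1 ∧ n % k + 1 < k)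
    rw [hd, hm]
    split_ifs <;> omega
  · obtain ⟨hd, hm⟩ := (Nat.div_mod_unique hk).mpr (⟨by rw [mul_add]; omega, hk⟩ :
      0 + k * (n / k + 1) = n + 1 ∧ 0 < k)
    rw [hd, hm]
    split_ifs <;> omega

section Weight

variable {k N : ℕ} [NeZero k] {A : Fin k → Matrix (Fin N) (Fin N) ℕ} {δ : ℝ} {ρ : Fin k → ℝ}
  {x : Fin N → ℝ}

noncomputable def wtScale (δ : ℝ) (ρ : Fin k → ℝ) (n : ℕ) : ℝ :=
  (∏ i : Fin k, ρ i ^ (if (i : ℕ) < n % k then n / k + 1 else n / k)) ^ (-(1 / δ))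

theorem prefixPath_src (p : PathSpace k N A) (n : ℕ) : (prefixPath p n).src = (p.1 n).rg :=
  rfl

theorem wt_eq {ℓ : ℕ} (lam : FinPath k N A ℓ) :
    wt δ ρ x ⟨ℓ, lam⟩ = wtScale δ ρ ℓ * x lam.src := rfl

theorem prod_pow_ite_succ (n : ℕ) :
    ∏ i : Fin k, ρ i ^ (if (i : ℕ) < (n + 1) % k then (n + 1) / k + 1 else (n + 1) / k)
      = (∏ i : Fin k, ρ i ^ (if (i : ℕ) < n % k then n / k + 1 else n / k)) * ρ n := by
  simp only [ite_lt_mod_succ, pow_add, Finset.prod_mul_distrib, Finset.prod_pow_boole,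
    Finset.mem_univ, if_true]

theorem wtScale_succ (hρ : ∀ i, 0 ≤ ρ i) (n : ℕ) :
    wtScale δ ρ (n + 1) = wtScale δ ρ n * ρ n ^ (-(1 / δ)) := by
  rw [wtScale, wtScale, prod_pow_ite_succ]
  exact Real.mul_rpow (Finset.prod_nonneg fun i _ => pow_nonneg (hρ i) _) (hρ _)

theorem wt_pos (hρ : ∀ i, 0 < ρ i)
    (hx : ∀ v, 0 < x v) {ℓ : ℕ} (lam : FinPath k N A ℓ) : 0 < wt δ ρ x ⟨ℓ, lam⟩ :=
  mul_pos (Real.rpow_pos_of_pos (Finset.prod_pos fun i _ => pow_pos (hρ i) _) _) (hx _)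

theorem wt_prefixPath_succ_le (hρ : ∀ i, 0 < ρ i)
    (hx : 0 ≤ x) (hxeig : ∀ i, ((A i).map (Nat.cast : ℕ → ℝ)).mulVec x = ρ i • x)
    (p : PathSpace k N A) (n : ℕ) :
    wt δ ρ x ⟨n + 1, prefixPath p (n + 1)⟩
      ≤ ρ n ^ (1 - 1 / δ) * wt δ ρ x ⟨n, prefixPath p n⟩ := by
  have hedge : x (p.1 n).src ≤ ρ n * x (p.1 n).rg :=
    le_mul_of_mulVec_eq_smul hx (hxeig _) (p.1 n).idx.pos
  have hscale : 0 ≤ wtScale δ ρ n * ρ n ^ (-(1 / δ)) :=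
    mul_nonneg (Real.rpow_nonneg (Finset.prod_nonneg fun i _ => pow_nonneg (hρ i).le _) _)
      (Real.rpow_nonneg (hρ _).le _)
  have hsrc : (prefixPath p (n + 1)).src = (p.1 n).src := (p.2 n).symm
  calc wt δ ρ x ⟨n + 1, prefixPath p (n + 1)⟩
      = wtScale δ ρ n * ρ n ^ (-(1 / δ)) * x (p.1 n).src := by
        rw [wt_eq, wtScale_succ (fun i => (hρ i).le), hsrc]
    _ ≤ wtScale δ ρ n * ρ n ^ (-(1 / δ)) * (ρ n * x (p.1 n).rg) :=
        mul_le_mul_of_nonneg_left hedge hscale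
    _ = ρ n ^ (1 - 1 / δ) * wt δ ρ x ⟨n, prefixPath p n⟩ := by
        rw [wt_eq, prefixPath_src, sub_eq_neg_add, Real.rpow_add (hρ _), Real.rpow_one]
        ring

theorem antitone_wt_prefixPath (hρ : ∀ i, 1 ≤ ρ i) (hδ : δ ∈ Set.Ioc 0 1) (hx : ∀ v, 0 < x v)
    (hxeig : ∀ i, ((A i).map (Nat.cast : ℕ → ℝ)).mulVec x = ρ i • x) (p : PathSpace k N A) :
    Antitone fun m => wt δ ρ x ⟨m, prefixPath p m⟩ := by
  have hρpos : ∀ i, 0 < ρ i := fun i => one_pos.trans_le (hρ i)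
  refine antitone_nat_of_succ_le fun n => ?_
  have hexp : 1 - 1 / δ ≤ 0 := by
    rw [sub_nonpos, le_div_iff₀ hδ.1, one_mul]; exact hδ.2
  calc wt δ ρ x ⟨n + 1, prefixPath p (n + 1)⟩
      ≤ ρ n ^ (1 - 1 / δ) * wt δ ρ x ⟨n, prefixPath p n⟩ :=
        wt_prefixPath_succ_le hρpos (fun v => (hx v).le) hxeig p n
    _ ≤ wt δ ρ x ⟨n, prefixPath p n⟩ :=
        mul_le_of_le_one_left (wt_pos hρpos hx _).le
          (Real.rpow_le_one_of_one_le_of_nonpos (hρ _) hexp)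

end Weight

section Paths

variable {k N : ℕ} [NeZero k] {A : Fin k → Matrix (Fin N) (Fin N) ℕ}

theorem exists_edge_rg (hrow : ∀ i a, ∃ b, 0 < A i a b) (n : ℕ) (a : Fin N) :
    ∃ e : Edge k N A n, e.rg = a :=
  let ⟨b, hb⟩ := hrow n a
  ⟨⟨a, b, ⟨0, hb⟩⟩, rfl⟩

theorem exists_edge_src (hcol : ∀ i b, ∃ a, 0 < A i a b) (n : ℕ) (b : Fin N) :
    ∃ e : Edge k N A n, e.src = b :=
  let ⟨a, ha⟩ := hcol n b
  ⟨⟨a, b, ⟨0, ha⟩⟩, rfl⟩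

def edgeRgEquiv (n : ℕ) (a : Fin N) :
    {e : Edge k N A n // e.rg = a} ≃ Σ b : Fin N, Fin (A (n : Fin k) a b) :=
  ((edgeEquiv n).subtypeEquiv fun _ => Iff.rfl).trans (Equiv.sigmaSubtype a)

theorem card_edge_rg (n : ℕ) (a : Fin N) :
    Nat.card {e : Edge k N A n // e.rg = a} = ∑ b, A (n : Fin k) a b := by
  simp [Nat.card_congr (edgeRgEquiv n a)]

theorem edge_eq_of_row_sum_le_one {n : ℕ} {a : Fin N} (hsum : ∑ b, A n a b ≤ 1)
    {e₁ e₂ : Edge k N A n} (h₁ : e₁.rg = a) (h₂ : e₂.rg = a) : e₁ = e₂ := by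
  have : Subsingleton {e : Edge k N A n // e.rg = a} := by
    rw [← Finite.card_le_one_iff_subsingleton, card_edge_rg]; exact hsum
  exact congrArg Subtype.val (Subsingleton.elim (α := {e : Edge k N A n // e.rg = a})
    ⟨e₁, h₁⟩ ⟨e₂, h₂⟩)

theorem exists_edge_ne_of_two_le_row_sum {n : ℕ} {a : Fin N} (hsum : 2 ≤ ∑ b, A n a b) :
    ∃ e₁ e₂ : Edge k N A n, e₁.rg = a ∧ e₂.rg = a ∧ e₁ ≠ e₂ := by
  have : Nontrivial {e : Edge k N A n // e.rg = a} := by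
    rw [← Finite.one_lt_card_iff_nontrivial, card_edge_rg]; exact hsum
  obtain ⟨⟨e₁, h₁⟩, ⟨e₂, h₂⟩, hne⟩ := exists_pair_ne {e : Edge k N A n // e.rg = a}
  exact ⟨e₁, e₂, h₁, h₂, fun h => hne (Subtype.ext h)⟩

def FinPath.snoc {ℓ : ℕ} (lam : FinPath k N A ℓ) (e : Edge k N A ℓ) (he : e.rg = lam.src) :
    FinPath k N A (ℓ + 1) where
  vtx := Fin.snoc lam.vtx e.src
  edge := Fin.snoc (α := fun i : Fin (ℓ + 1) => Edge k N A i) lam.edge e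
  rg_eq := Fin.lastCases (by simpa [FinPath.src] using he) fun i => by
    simpa [← Fin.castSucc_succ] using lam.rg_eq i
  src_eq := Fin.lastCases (by simp) fun i => by
    rw [Fin.succ_castSucc, Fin.snoc_castSucc, Fin.snoc_castSucc]
    exact lam.src_eq i

theorem FinPath.snoc_src {ℓ : ℕ} (lam : FinPath k N A ℓ) (e : Edge k N A ℓ)
    (he : e.rg = lam.src) : (lam.snoc e he).src = e.src := by
  simp [FinPath.snoc, FinPath.src]

theorem exists_finPath_src (hcol : ∀ i b, ∃ a, 0 < A i a b) (b : Fin N) :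
    ∀ ℓ, ∃ lam : FinPath k N A ℓ, lam.src = b
  | 0 => ⟨vertexPath b, rfl⟩
  | ℓ + 1 => by
    obtain ⟨e, he⟩ := exists_edge_src hcol ℓ b
    obtain ⟨lam, hlam⟩ := exists_finPath_src hcol e.rg ℓ
    exact ⟨lam.snoc e hlam.symm, (lam.snoc_src e _).trans he⟩

theorem exists_tail (hrow : ∀ i a, ∃ b, 0 < A i a b) {n₀ : ℕ} (e : Edge k N A n₀) :
    ∃ f : (n : ℕ) → Edge k N A n, f n₀ = e ∧ ∀ n ≥ n₀, (f n).src = (f (n + 1)).rg := by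
  choose next hnext using exists_edge_rg hrow
  -- `u n` is the vertex at level `n` of the tail, for `n > n₀`
  let u : ℕ → Fin N := fun n =>
    Nat.rec e.src (fun m um => if m ≤ n₀ then e.src else (next m um).src) n
  refine ⟨fun n => if h : n = n₀ then h ▸ e else next n (u n), dif_pos rfl, fun n hn => ?_⟩
  have hu : u (n + 1) = if n ≤ n₀ then e.src else (next n (u n)).src := rfl
  obtain rfl | hn := hn.eq_or_lt
  · simp [hu, hnext]
  · simp only [dif_neg hn.ne', dif_neg (show n + 1 ≠ n₀ by omega), hnext, hu, if_neg hn.not_ge]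

theorem exists_mem_cyl_apply_eq (hrow : ∀ i a, ∃ b, 0 < A i a b) {ℓ : ℕ}
    (lam : FinPath k N A ℓ) (e : Edge k N A ℓ) (he : e.rg = lam.src) :
    ∃ p ∈ Cyl lam, p.1 ℓ = e := by
  obtain ⟨f, hfe, hf⟩ := exists_tail hrow e
  let g : (n : ℕ) → Edge k N A n := fun n => if h : n < ℓ then lam.edge ⟨n, h⟩ else f n
  have hg : ∀ n, (g n).src = (g (n + 1)).rg := by
    intro n
    by_cases h : n + 1 < ℓ
    · simp [g, h, Nat.lt_of_succ_lt h, lam.src_eq, lam.rg_eq, Fin.succ, Fin.castSucc]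
    by_cases h' : n < ℓ
    · have hℓ : n + 1 = ℓ := by omega
      subst hℓ
      simp [g, hfe, he, lam.src_eq, FinPath.src, Fin.last, Fin.succ]
    · simp [g, h, h', hf n (by omega)]
  refine ⟨⟨g, hg⟩, ⟨?_, fun i => by simp [g]⟩, by simp [g, hfe]⟩
  show (g 0).rg = lam.vtx 0
  rcases Nat.eq_zero_or_pos ℓ with rfl | hℓ
  · simpa [g, hfe, FinPath.src] using he
  · simp [g, hℓ, lam.rg_eq]

theorem rg_apply_eq_src_of_mem_cyl {ℓ : ℕ} {lam : FinPath k N A ℓ} {p : PathSpace k N A}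
    (hp : p ∈ Cyl lam) : (p.1 ℓ).rg = lam.src := by
  cases ℓ with
  | zero => exact hp.1
  | succ m =>
    rw [← p.2 m, show p.1 m = _ from hp.2 (Fin.last m), lam.src_eq, Fin.succ_last]
    rfl

end Paths

section Distance

variable {k N : ℕ} [NeZero k] {A : Fin k → Matrix (Fin N) (Fin N) ℕ} {p q : PathSpace k N A}

theorem firstDiff_le {n : ℕ} (h : p.1 n ≠ q.1 n) : firstDiff p q ≤ n :=
  Nat.sInf_le h

theorem le_firstDiff {m : ℕ} (hne : p ≠ q) (h : ∀ n < m, p.1 n = q.1 n) :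
    m ≤ firstDiff p q := by
  have hdiff : {n | p.1 n ≠ q.1 n}.Nonempty :=
    Function.ne_iff.mp fun h => hne (Subtype.ext h)
  by_contra! hlt
  exact Nat.sInf_mem hdiff (h _ hlt)

theorem distW_of_ne_of_rg_eq (w : FB k N A → ℝ) (hne : p ≠ q)
    (hrg : (p.1 0).rg = (q.1 0).rg) :
    distW w p q = w ⟨firstDiff p q, prefixPath p (firstDiff p q)⟩ := by
  rw [distW, if_neg hne, if_pos hrg]

variable {δ : ℝ} {ρ : Fin k → ℝ} {x : Fin N → ℝ}

theorem distW_wt_le_of_eqOn (hρ : ∀ i, 1 ≤ ρ i) (hδ : δ ∈ Set.Ioc 0 1) (hx : ∀ v, 0 < x v)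
    (hxeig : ∀ i, ((A i).map (Nat.cast : ℕ → ℝ)).mulVec x = ρ i • x) {m : ℕ}
    (hrg : (p.1 0).rg = (q.1 0).rg) (h : ∀ n < m, p.1 n = q.1 n) :
    distW (wt δ ρ x) p q ≤ wt δ ρ x ⟨m, prefixPath p m⟩ := by
  by_cases hne : p = q
  · rw [distW, if_pos hne]
    exact (wt_pos (fun i => one_pos.trans_le (hρ i)) hx _).le
  · rw [distW_of_ne_of_rg_eq _ hne hrg]
    exact antitone_wt_prefixPath hρ hδ hx hxeig p (le_firstDiff hne h)

variable {ℓ : ℕ} {lam : FinPath k N A ℓ}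

theorem wt_prefixPath_of_mem_cyl (hp : p ∈ Cyl lam) :
    wt δ ρ x ⟨ℓ, prefixPath p ℓ⟩ = wt δ ρ x ⟨ℓ, lam⟩ := by
  rw [wt_eq, wt_eq, prefixPath_src, rg_apply_eq_src_of_mem_cyl hp]

theorem distW_wt_le_of_mem_cyl (hρ : ∀ i, 1 ≤ ρ i) (hδ : δ ∈ Set.Ioc 0 1)
    (hx : ∀ v, 0 < x v) (hxeig : ∀ i, ((A i).map (Nat.cast : ℕ → ℝ)).mulVec x = ρ i • x)
    (hp : p ∈ Cyl lam) (hq : q ∈ Cyl lam) :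
    distW (wt δ ρ x) p q ≤ wt δ ρ x ⟨ℓ, lam⟩ := by
  rw [← wt_prefixPath_of_mem_cyl hp]
  exact distW_wt_le_of_eqOn hρ hδ hx hxeig (hp.1.trans hq.1.symm)
    fun n hn => (hp.2 ⟨n, hn⟩).trans (hq.2 ⟨n, hn⟩).symm

theorem distW_wt_of_mem_cyl_of_apply_ne (hp : p ∈ Cyl lam) (hq : q ∈ Cyl lam)
    (h : p.1 ℓ ≠ q.1 ℓ) : distW (wt δ ρ x) p q = wt δ ρ x ⟨ℓ, lam⟩ := by
  have hne : p ≠ q := fun hpq => h (hpq ▸ rfl)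
  have hfirst : firstDiff p q = ℓ := (firstDiff_le h).antisymm
    (le_firstDiff hne fun n hn => (hp.2 ⟨n, hn⟩).trans (hq.2 ⟨n, hn⟩).symm)
  rw [distW_of_ne_of_rg_eq _ hne (hp.1.trans hq.1.symm), hfirst, wt_prefixPath_of_mem_cyl hp]

theorem distW_wt_le_mul_of_row_sum_le_one (hρ : ∀ i, 1 ≤ ρ i) (hδ : δ ∈ Set.Ioc 0 1)
    (hx : ∀ v, 0 < x v) (hxeig : ∀ i, ((A i).map (Nat.cast : ℕ → ℝ)).mulVec x = ρ i • x)
    (hsum : ∑ b, A ℓ lam.src b ≤ 1) (hp : p ∈ Cyl lam) (hq : q ∈ Cyl lam) :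
    distW (wt δ ρ x) p q ≤ ρ ℓ ^ (1 - 1 / δ) * wt δ ρ x ⟨ℓ, lam⟩ := by
  have hedge : p.1 ℓ = q.1 ℓ := edge_eq_of_row_sum_le_one hsum
    (rg_apply_eq_src_of_mem_cyl hp) (rg_apply_eq_src_of_mem_cyl hq)
  have hagree : ∀ n < ℓ + 1, p.1 n = q.1 n := fun n hn =>
    (Nat.lt_succ_iff_lt_or_eq.mp hn).elim
      (fun hn => (hp.2 ⟨n, hn⟩).trans (hq.2 ⟨n, hn⟩).symm) (fun hn => hn ▸ hedge)
  calc distW (wt δ ρ x) p q ≤ wt δ ρ x ⟨ℓ + 1, prefixPath p (ℓ + 1)⟩ :=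
        distW_wt_le_of_eqOn hρ hδ hx hxeig (hp.1.trans hq.1.symm) hagree
    _ ≤ ρ ℓ ^ (1 - 1 / δ) * wt δ ρ x ⟨ℓ, prefixPath p ℓ⟩ :=
        wt_prefixPath_succ_le (fun i => one_pos.trans_le (hρ i)) (fun v => (hx v).le) hxeig p ℓ
    _ = ρ ℓ ^ (1 - 1 / δ) * wt δ ρ x ⟨ℓ, lam⟩ := by rw [wt_prefixPath_of_mem_cyl hp]

end Distance

section Diameter

variable {k N : ℕ} [NeZero k] {A : Fin k → Matrix (Fin N) (Fin N) ℕ} {δ : ℝ} {ρ : Fin k → ℝ}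
  {x : Fin N → ℝ} {ℓ : ℕ} {lam : FinPath k N A ℓ}

theorem cyl_nonempty (hrow : ∀ i a, ∃ b, 0 < A i a b) (lam : FinPath k N A ℓ) :
    (Cyl lam).Nonempty :=
  let ⟨e, he⟩ := exists_edge_rg hrow ℓ lam.src
  let ⟨p, hp, _⟩ := exists_mem_cyl_apply_eq hrow lam e he
  ⟨p, hp⟩

theorem sSup_distW_wt_cyl_eq (hrow : ∀ i a, ∃ b, 0 < A i a b) (hρ : ∀ i, 1 ≤ ρ i)
    (hδ : δ ∈ Set.Ioc 0 1) (hx : ∀ v, 0 < x v)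
    (hxeig : ∀ i, ((A i).map (Nat.cast : ℕ → ℝ)).mulVec x = ρ i • x)
    (hsum : 2 ≤ ∑ b, A ℓ lam.src b) :
    sSup (Set.image2 (distW (wt δ ρ x)) (Cyl lam) (Cyl lam)) = wt δ ρ x ⟨ℓ, lam⟩ := by
  obtain ⟨e₁, e₂, h₁, h₂, hne⟩ := exists_edge_ne_of_two_le_row_sum hsum
  obtain ⟨p, hp, hpe⟩ := exists_mem_cyl_apply_eq hrow lam e₁ h₁
  obtain ⟨q, hq, hqe⟩ := exists_mem_cyl_apply_eq hrow lam e₂ h₂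
  refine IsGreatest.csSup_eq ⟨⟨p, hp, q, hq, ?_⟩, Set.forall_mem_image2.mpr fun p hp q hq =>
    distW_wt_le_of_mem_cyl hρ hδ hx hxeig hp hq⟩
  exact distW_wt_of_mem_cyl_of_apply_ne hp hq (hpe ▸ hqe ▸ hne)

theorem sSup_distW_wt_cyl_lt (hrow : ∀ i a, ∃ b, 0 < A i a b) (hρ : ∀ i, 1 < ρ i)
    (hδ : δ ∈ Set.Ioo 0 1) (hx : ∀ v, 0 < x v)
    (hxeig : ∀ i, ((A i).map (Nat.cast : ℕ → ℝ)).mulVec x = ρ i • x)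
    (hsum : ∑ b, A ℓ lam.src b ≤ 1) :
    sSup (Set.image2 (distW (wt δ ρ x)) (Cyl lam) (Cyl lam)) < wt δ ρ x ⟨ℓ, lam⟩ := by
  have hexp : 1 - 1 / δ < 0 := by
    rw [sub_neg, lt_div_iff₀ hδ.1, one_mul]; exact hδ.2
  have hne := cyl_nonempty hrow lam
  calc sSup (Set.image2 (distW (wt δ ρ x)) (Cyl lam) (Cyl lam))
      ≤ ρ ℓ ^ (1 - 1 / δ) * wt δ ρ x ⟨ℓ, lam⟩ :=
        csSup_le (hne.image2 hne) <| Set.forall_mem_image2.mpr fun p hp q hq =>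
          distW_wt_le_mul_of_row_sum_le_one (fun i => (hρ i).le) (Set.Ioo_subset_Ioc_self hδ)
            hx hxeig hsum hp hq
    _ < wt δ ρ x ⟨ℓ, lam⟩ :=
        mul_lt_of_lt_one_left (wt_pos (fun i => one_pos.trans (hρ i)) hx lam)
          (Real.rpow_lt_one_of_one_lt_of_neg (hρ _) hexp)

end Diameter

theorem statement18_general (k N : ℕ) [NeZero k]
    (A : Fin k → Matrix (Fin N) (Fin N) ℕ)
    (hcomm : ∀ i j, A i * A j = A j * A i)
    (hrow : ∀ (i : Fin k) (a : Fin N), ∃ b, 0 < A i a b)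
    (hirr : IrreducibleFamily A)
    (ρ : Fin k → ℝ)
    (x : Fin N → ℝ) (hxpos : ∀ v, 0 < x v)
    (hxeig : ∀ i, ((A i).map (Nat.cast : ℕ → ℝ)).mulVec x = ρ i • x)
    (hρone : ∀ i, 1 < ρ i)
    (δ : ℝ) (hδ : δ ∈ Set.Ioo (0 : ℝ) 1) :
    (∀ (ℓ : ℕ) (lam : FinPath k N A ℓ),
        wt δ ρ x ⟨ℓ, lam⟩ =
          sSup { r : ℝ | ∃ p ∈ Cyl lam, ∃ q ∈ Cyl lam, distW (wt δ ρ x) p q = r })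
      ↔ (∀ (i : Fin k) (a : Fin N), 2 ≤ ∑ b, A i a b) := by
  constructor
  · intro hdiam i a
    by_contra! hlt
    obtain ⟨lam, rfl⟩ := exists_finPath_src (exists_pos_apply_col hcomm hrow hirr) a i
    have hsum : ∑ b, A ((i : ℕ) : Fin k) lam.src b ≤ 1 := by
      rw [Fin.cast_val_eq_self]; omega
    exact (sSup_distW_wt_cyl_lt hrow hρone hδ hxpos hxeig hsum).ne' (hdiam _ lam)
  · intro hsum ℓ lam
    exact (sSup_distW_wt_cyl_eq hrow (fun i => (hρone i).le) (Set.Ioo_subset_Ioc_self hδ)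
      hxpos hxeig (hsum _ _)).symm

/-- The weight `w_δ` equals the `d_δ`-diameter of every cylinder
set if and only if every row sum of every `A i` is at least `2`. -/
theorem statement18 (k N : ℕ) [NeZero k] [NeZero N]
    (A : Fin k → Matrix (Fin N) (Fin N) ℕ)
    (hcomm : ∀ i j, A i * A j = A j * A i)
    (hrow : ∀ (i : Fin k) (a : Fin N), ∃ b, 0 < A i a b)
    (hirr : IrreducibleFamily A)
    (ρ : Fin k → ℝ) (hρ : ∀ i, ρ i = specRad (A i))
    (x : Fin N → ℝ) (hxpos : ∀ v, 0 < x v) (hxsum : ∑ v, x v = 1)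
    (hxeig : ∀ i, ((A i).map (Nat.cast : ℕ → ℝ)).mulVec x = ρ i • x)
    (hρone : ∀ i, 1 < ρ i)
    (δ : ℝ) (hδ : δ ∈ Set.Ioo (0 : ℝ) 1) :
    (∀ (ℓ : ℕ) (lam : FinPath k N A ℓ),
        wt δ ρ x ⟨ℓ, lam⟩ =
          sSup { r : ℝ | ∃ p ∈ Cyl lam, ∃ q ∈ Cyl lam, distW (wt δ ρ x) p q = r })
      ↔ (∀ (i : Fin k) (a : Fin N), 2 ≤ ∑ b, A i a b) :=
  statement18_general k N A hcomm hrow hirr ρ x hxpos hxeig hρone δ hδ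

end KBratteli
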